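/- arXiv:2301.06904 — 3 statements merged into one kernel-verified Lean document; each statement's English description precedes it below -/
import Mathlib

section
/- For ε ∈ (0, π²/4), there exists a constant C such that for all λ in the strip ℝ + i(−ε, ε), |∑_{n≥0} Log(1 + iλ/(π²(n+1/2)²))| ≤ C(1 + |λ|^{1/2} · log(1 + |λ|)), where Log is the principal complex logarithm. -/
open Complex Real

/-!
Write `r n = π² (n + 1/2)²` and cut the series at `N ≈ √|λ|`. Every term is bounded through
`|Log w| ≤ |log |w|| + π`: in the strip `Re (1 + iλ/r n) ≥ 1 - 4ε/π² > 0`, and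
`|1 + iλ/r n| ≤ 1 + |λ|`, so each of the first `N` terms is `O(1 + log (1 + |λ|))`. For `n ≥ N`
one has `|λ|/r n ≤ 1/2`, hence `|Log (1 + iλ/r n)| ≤ (3/2) |λ|/r n ≤ |λ|/(n(n+1))`, and the tail
telescopes to at most `|λ|/N ≤ √|λ|`.
-/

lemma hasSum_inv_nat_add_mul_succ {N : ℕ} (hN : 0 < N) :
    HasSum (fun i : ℕ => (((i + N : ℕ) : ℝ) * ((i + N : ℕ) + 1))⁻¹) (N : ℝ)⁻¹ := by
  set u : ℕ → ℝ := fun i => ((i + N : ℕ) : ℝ)⁻¹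
  have hterm : ∀ i, (((i + N : ℕ) : ℝ) * ((i + N : ℕ) + 1))⁻¹ = u i - u (i + 1) := by
    intro i
    have : ((i + N : ℕ) : ℝ) ≠ 0 := by positivity
    simp only [u, Nat.cast_add, Nat.cast_one] at *
    field_simp
    ring
  have hu : Filter.Tendsto u Filter.atTop (nhds 0) :=
    tendsto_inv_atTop_zero.comp
      (tendsto_natCast_atTop_atTop.comp (Filter.tendsto_add_atTop_nat N))
  rw [hasSum_iff_tendsto_nat_of_nonneg (fun i => by positivity)]
  simp only [hterm, Finset.sum_range_sub']
  simpa [u] using (tendsto_const_nhds (x := u 0)).sub hu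

lemma norm_tsum_le_of_head_of_tail {E : Type*} [NormedAddCommGroup E] [CompleteSpace E]
    {f : ℕ → E} {N : ℕ} (hN : 0 < N) {B c : ℝ} (head : ∀ n < N, ‖f n‖ ≤ B)
    (tail : ∀ n, N ≤ n → ‖f n‖ ≤ c * ((n : ℝ) * (n + 1))⁻¹) :
    ‖∑' n, f n‖ ≤ N * B + c / N := by
  have hg := (hasSum_inv_nat_add_mul_succ hN).mul_left c
  have htail : ∀ i, ‖f (i + N)‖ ≤ c * (((i + N : ℕ) : ℝ) * ((i + N : ℕ) + 1))⁻¹ :=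
    fun i => tail _ (Nat.le_add_left N i)
  have hsum : Summable fun i => ‖f (i + N)‖ :=
    hg.summable.of_nonneg_of_le (fun _ => norm_nonneg _) htail
  have hsum' : Summable fun n => ‖f n‖ := (summable_nat_add_iff N).mp hsum
  calc ‖∑' n, f n‖ ≤ ∑' n, ‖f n‖ := norm_tsum_le_tsum_norm hsum'
    _ = ∑ n ∈ Finset.range N, ‖f n‖ + ∑' i, ‖f (i + N)‖ := (hsum'.sum_add_tsum_nat_add N).symm
    _ ≤ N * B + c / N := by
      gcongr
      · simpa using Finset.sum_le_card_nsmul _ _ _ fun n hn => head n (Finset.mem_range.mp hn)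
      · simpa [div_eq_mul_inv] using hasSum_le htail hsum.hasSum hg

lemma norm_log_le_abs_log_norm_add_pi (z : ℂ) : ‖log z‖ ≤ |Real.log ‖z‖| + π := by
  refine (norm_add_le _ _).trans ?_
  rw [norm_real, Real.norm_eq_abs, norm_mul, norm_I, mul_one, norm_real, Real.norm_eq_abs]
  exact add_le_add_right (abs_arg_le_pi z) _

lemma norm_log_le_of_le_re {z : ℂ} {δ : ℝ} (hδ : 0 < δ) (hδ1 : δ ≤ 1) (hz : δ ≤ z.re) :
    ‖log z‖ ≤ π - Real.log δ + Real.log (1 + ‖z - 1‖) := by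
  have hlow : δ ≤ ‖z‖ := hz.trans (re_le_norm z)
  have hup : ‖z‖ ≤ 1 + ‖z - 1‖ := by simpa using norm_add_le (1 : ℂ) (z - 1)
  have h1 : Real.log δ ≤ Real.log ‖z‖ := Real.log_le_log hδ hlow
  have h2 : Real.log ‖z‖ ≤ Real.log (1 + ‖z - 1‖) := Real.log_le_log (hδ.trans_le hlow) hup
  have h3 : Real.log δ ≤ 0 := Real.log_nonpos hδ.le hδ1
  have h4 : 0 ≤ Real.log (1 + ‖z - 1‖) := Real.log_nonneg (by linarith [norm_nonneg (z - 1)])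
  have : |Real.log ‖z‖| ≤ -Real.log δ + Real.log (1 + ‖z - 1‖) :=
    abs_le.mpr ⟨by linarith, by linarith⟩
  linarith [norm_log_le_abs_log_norm_add_pi z]

lemma norm_I_mul_div_ofReal (l : ℂ) {r : ℝ} (hr : 0 ≤ r) : ‖I * l / r‖ = ‖l‖ / r := by
  rw [norm_div, norm_mul, norm_I, one_mul, Complex.norm_of_nonneg hr]

lemma norm_log_one_add_I_mul_div_le {l : ℂ} {r δ : ℝ} (hδ : 0 < δ) (hr : 1 ≤ r)
    (hl : |l.im| ≤ (1 - δ) * r) :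
    ‖log (1 + I * l / r)‖ ≤ π - Real.log δ + Real.log (1 + ‖l‖) := by
  have hr0 : 0 < r := one_pos.trans_le hr
  have hδ1 : δ ≤ 1 := by nlinarith [abs_nonneg l.im]
  have hre : δ ≤ (1 + I * l / r).re := by
    have : (1 + I * l / r).re = 1 - l.im / r := by simp [div_ofReal_re, sub_eq_add_neg, neg_div]
    rw [this, le_sub_comm, div_le_iff₀ hr0]
    linarith [neg_abs_le l.im, le_abs_self l.im]
  have hw : ‖I * l / r‖ ≤ ‖l‖ := by
    rw [norm_I_mul_div_ofReal l hr0.le]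
    exact div_le_self (norm_nonneg l) hr
  refine (norm_log_le_of_le_re hδ hδ1 hre).trans ?_
  rw [add_sub_cancel_left]
  gcongr

lemma norm_log_one_add_I_mul_div_pi_sq_le_of_abs_im_lt {l : ℂ} {ε : ℝ} (hε : ε < π ^ 2 / 4)
    (hl : |l.im| < ε) (n : ℕ) :
    ‖log (1 + I * l / ((π ^ 2 * (n + 1 / 2) ^ 2 : ℝ) : ℂ))‖ ≤
      π - Real.log (1 - 4 * ε / π ^ 2) + Real.log (1 + ‖l‖) := by
  have hr : π ^ 2 / 4 ≤ π ^ 2 * (n + 1 / 2) ^ 2 := by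
    have : (1 / 2 : ℝ) ^ 2 ≤ (n + 1 / 2) ^ 2 := by gcongr; linarith [n.cast_nonneg (α := ℝ)]
    linarith [mul_le_mul_of_nonneg_left this (sq_nonneg π)]
  have hδ : 0 < 1 - 4 * ε / π ^ 2 := by
    rw [sub_pos, div_lt_one (by positivity)]
    linarith
  have hπ : 4 < π ^ 2 := by nlinarith [pi_gt_three]
  refine norm_log_one_add_I_mul_div_le hδ (by linarith) (hl.le.trans ?_)
  have hε0 : 0 ≤ ε := (abs_nonneg _).trans hl.le
  calc ε = 4 * ε / π ^ 2 * (π ^ 2 / 4) := by field_simp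
    _ ≤ (1 - (1 - 4 * ε / π ^ 2)) * (π ^ 2 * (n + 1 / 2) ^ 2) := by
      rw [sub_sub_cancel]
      gcongr

lemma norm_log_one_add_I_mul_div_pi_sq_le_of_norm_le_sq {l : ℂ} {n : ℕ} (hn : 0 < n)
    (hl : ‖l‖ ≤ n ^ 2) :
    ‖log (1 + I * l / ((π ^ 2 * (n + 1 / 2) ^ 2 : ℝ) : ℂ))‖ ≤ ‖l‖ * ((n : ℝ) * (n + 1))⁻¹ := by
  set r : ℝ := π ^ 2 * (n + 1 / 2) ^ 2
  have hπ : 9 < π ^ 2 := by nlinarith [pi_gt_three]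
  have hn0 : 0 < (n : ℝ) * (n + 1) := by positivity
  have hr : 9 * ((n : ℝ) * (n + 1)) ≤ r := by
    have : (n : ℝ) * (n + 1) ≤ (n + 1 / 2) ^ 2 := by nlinarith
    exact mul_le_mul hπ.le this hn0.le (by positivity)
  have hr0 : 0 < r := hn0.trans_le (by linarith)
  have hw : ‖I * l / r‖ = ‖l‖ / r := norm_I_mul_div_ofReal l hr0.le
  refine (norm_log_one_add_half_le_self ?_).trans ?_
  · rw [hw, div_le_iff₀ hr0]
    nlinarith
  · rw [hw, mul_div_left_comm, div_eq_mul_inv]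
    refine mul_le_mul_of_nonneg_left ?_ (norm_nonneg l)
    rw [← div_eq_mul_inv, div_le_iff₀ hr0, inv_mul_eq_div, le_div_iff₀ hn0]
    linarith

lemma sqrt_le_two_mul_one_add_sqrt_mul_log {x : ℝ} (hx : 0 ≤ x) :
    √x ≤ 2 * (1 + √x * Real.log (1 + x)) := by
  have hL : 0 ≤ Real.log (1 + x) := Real.log_nonneg (by linarith)
  rcases le_or_gt x 4 with h | h
  · have : √x ≤ 2 := Real.sqrt_le_iff.mpr ⟨by norm_num, by linarith⟩
    nlinarith [mul_nonneg (Real.sqrt_nonneg x) hL]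
  · have : 1 ≤ Real.log (1 + x) := by
      rw [Real.le_log_iff_exp_le (by linarith)]
      linarith [Real.exp_one_lt_d9]
    nlinarith [Real.sqrt_nonneg x]

lemma log_one_add_le_one_add_sqrt_mul_log {x : ℝ} (hx : 0 ≤ x) :
    Real.log (1 + x) ≤ 1 + √x * Real.log (1 + x) := by
  have hL : 0 ≤ Real.log (1 + x) := Real.log_nonneg (by linarith)
  rcases le_or_gt x 1 with h | h
  · have : Real.log (1 + x) ≤ 1 := by
      rw [Real.log_le_iff_le_exp (by linarith)]
      linarith [Real.add_one_le_exp 1]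
    nlinarith [mul_nonneg (Real.sqrt_nonneg x) hL]
  · nlinarith [Real.one_le_sqrt.mpr h.le]

lemma mul_add_log_add_div_le {A x N : ℝ} (hA : 0 ≤ A) (hx : 0 ≤ x) (hlt : √x < N)
    (hle : N ≤ √x + 1) :
    N * (A + Real.log (1 + x)) + x / N ≤ (3 * A + 4) * (1 + √x * Real.log (1 + x)) := by
  have hs := Real.sqrt_nonneg x
  have hL : 0 ≤ Real.log (1 + x) := Real.log_nonneg (by linarith)
  have hN : 0 < N := hs.trans_lt hlt
  have hdiv : x / N ≤ √x := by
    rw [div_le_iff₀ hN]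
    nlinarith [Real.sq_sqrt hx]
  have hsL := mul_nonneg hs hL
  nlinarith [sqrt_le_two_mul_one_add_sqrt_mul_log hx, log_one_add_le_one_add_sqrt_mul_log hx,
    mul_le_mul_of_nonneg_right hle (add_nonneg hA hL), mul_nonneg hA hsL]

theorem stmt_3_general (ε : ℝ) (hε' : ε < Real.pi ^ 2 / 4) :
    ∃ C : ℝ, ∀ l : ℂ, |l.im| < ε →
      ‖(∑' n : ℕ,
          Complex.log (1 + Complex.I * l / ((Real.pi : ℂ) ^ 2 * ((n : ℂ) + 1 / 2) ^ 2)))‖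
        ≤ C * (1 + Real.sqrt ‖l‖ * Real.log (1 + ‖l‖)) := by
  set δ := 1 - 4 * ε / π ^ 2
  refine ⟨3 * (π - Real.log δ) + 4, fun l hl => ?_⟩
  have hA : 0 ≤ π - Real.log δ := by
    have hδ1 : δ ≤ 1 := sub_le_self _ (div_nonneg (by linarith [abs_nonneg l.im]) (sq_nonneg π))
    have hδ : 0 < δ := by
      rw [sub_pos, div_lt_one (by positivity)]
      linarith
    linarith [pi_pos, Real.log_nonpos hδ.le hδ1]
  obtain ⟨N, hNpos, hlt, hle⟩ : ∃ N : ℕ, 0 < N ∧ √‖l‖ < N ∧ (N : ℝ) ≤ √‖l‖ + 1 :=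
    ⟨⌊√‖l‖⌋₊ + 1, Nat.succ_pos _, by exact_mod_cast Nat.lt_floor_add_one _,
      by push_cast; linarith [Nat.floor_le (Real.sqrt_nonneg ‖l‖)]⟩
  have hcast (n : ℕ) :
      (π : ℂ) ^ 2 * ((n : ℂ) + 1 / 2) ^ 2 = ((π ^ 2 * (n + 1 / 2) ^ 2 : ℝ) : ℂ) := by
    push_cast; ring
  simp_rw [hcast]
  refine (norm_tsum_le_of_head_of_tail hNpos
    (fun n _ => norm_log_one_add_I_mul_div_pi_sq_le_of_abs_im_lt hε' hl n) (fun n hn => ?_)).trans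
    (mul_add_log_add_div_le hA (norm_nonneg l) hlt hle)
  exact norm_log_one_add_I_mul_div_pi_sq_le_of_norm_le_sq (hNpos.trans_le hn)
    (Real.sqrt_le_iff.mp (hlt.le.trans (by exact_mod_cast hn))).2

theorem stmt_3 (ε : ℝ) (hε : 0 < ε) (hε' : ε < Real.pi ^ 2 / 4) :
    ∃ C : ℝ, ∀ l : ℂ, |l.im| < ε →
      ‖(∑' n : ℕ,
          Complex.log (1 + Complex.I * l / ((Real.pi : ℂ) ^ 2 * ((n : ℂ) + 1 / 2) ^ 2)))‖
        ≤ C * (1 + Real.sqrt ‖l‖ * Real.log (1 + ‖l‖)) :=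
  stmt_3_general ε hε'
end

section
/- There is a constant c > 0 such that for all real λ, ∑_{n≥0} (1/2)·log(1 + λ²/(π⁴(n+1/2)⁴)) ≥ c·|λ|^{1/2} − 1. -/
theorem stmt_4 :
    ∃ c : ℝ, 0 < c ∧ ∀ l : ℝ,
      c * Real.sqrt |l| - 1 ≤
        ∑' n : ℕ, (1 / 2) * Real.log (1 + l ^ 2 / (Real.pi ^ 4 * ((n : ℝ) + 1 / 2) ^ 4)) := by
  have hπ := Real.pi_pos
  have hlog2 : (0:ℝ) < Real.log 2 := Real.log_pos (by norm_num)
  have hlog2' : Real.log 2 ≤ 1 := by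
    have := Real.log_le_sub_one_of_pos (x := 2) (by norm_num)
    linarith
  refine ⟨Real.log 2 / (2 * Real.pi), by positivity, fun l => ?_⟩
  set f : ℕ → ℝ := fun n => (1/2) * Real.log (1 + l^2 / (Real.pi^4 * ((n:ℝ)+1/2)^4)) with hf
  have hnonneg : ∀ n, 0 ≤ f n := by
    intro n
    have h1 : (1:ℝ) ≤ 1 + l^2 / (Real.pi^4 * ((n:ℝ)+1/2)^4) := by
      have : (0:ℝ) ≤ l^2 / (Real.pi^4 * ((n:ℝ)+1/2)^4) := by positivity
      linarith
    exact mul_nonneg (by norm_num) (Real.log_nonneg h1)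
  have hsummable : Summable f := by
    have hg : Summable (fun n : ℕ => (1/2) * (l^2 * 16 / Real.pi^4) * (1/((n:ℝ)+1)^4)) := by
      apply Summable.mul_left
      have h4 : Summable (fun n : ℕ => 1/((n:ℝ))^4) :=
        Real.summable_one_div_nat_pow.mpr (by norm_num)
      have := (summable_nat_add_iff 1).mpr h4
      simpa using this
    refine Summable.of_nonneg_of_le hnonneg (fun n => ?_) hg
    have hx : (0:ℝ) < 1 + l^2 / (Real.pi^4 * ((n:ℝ)+1/2)^4) := by positivity
    have hlog : Real.log (1 + l^2 / (Real.pi^4 * ((n:ℝ)+1/2)^4)) ≤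
        l^2 / (Real.pi^4 * ((n:ℝ)+1/2)^4) := by
      have := Real.log_le_sub_one_of_pos hx
      linarith
    have hfrac : l^2 / (Real.pi^4 * ((n:ℝ)+1/2)^4) ≤ (l^2 * 16 / Real.pi^4) * (1/((n:ℝ)+1)^4) := by
      have h1 : ((n:ℝ)+1)^4 ≤ 16 * ((n:ℝ)+1/2)^4 := by nlinarith [sq_nonneg ((n:ℝ)), sq_nonneg ((n:ℝ)+1), Nat.cast_nonneg (α := ℝ) n]
      rw [div_mul_div_comm, div_le_div_iff₀ (by positivity) (by positivity)]
      nlinarith [mul_le_mul_of_nonneg_left h1 (show (0:ℝ) ≤ l^2 * Real.pi^4 by positivity)]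
    calc f n ≤ (1/2) * (l^2 / (Real.pi^4 * ((n:ℝ)+1/2)^4)) := by
          exact mul_le_mul_of_nonneg_left hlog (by norm_num)
      _ ≤ (1/2) * ((l^2 * 16 / Real.pi^4) * (1/((n:ℝ)+1)^4)) := by
          exact mul_le_mul_of_nonneg_left hfrac (by norm_num)
      _ = (1/2) * (l^2 * 16 / Real.pi^4) * (1/((n:ℝ)+1)^4) := by ring
  -- N : number of "big" terms
  set s := Real.sqrt |l| with hs
  have hs0 : 0 ≤ s := Real.sqrt_nonneg _
  set N : ℕ := ⌊s / Real.pi + 1/2⌋₊ with hN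
  have hNarg : (0:ℝ) ≤ s / Real.pi + 1/2 := by positivity
  have hNle : (N:ℝ) ≤ s / Real.pi + 1/2 := Nat.floor_le hNarg
  have hNgt : s / Real.pi - 1/2 < (N:ℝ) := by
    have := Nat.lt_floor_add_one (s / Real.pi + 1/2)
    linarith
  have hkey : ∀ n ∈ Finset.range N, Real.log 2 / 2 ≤ f n := by
    intro n hn
    rw [Finset.mem_range] at hn
    have hn' : (n:ℝ) + 1 ≤ (N:ℝ) := by exact_mod_cast hn
    have h1 : (n:ℝ) + 1/2 ≤ s / Real.pi := by linarith
    have h2 : Real.pi * ((n:ℝ) + 1/2) ≤ s := by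
      rw [le_div_iff₀ hπ] at h1
      linarith
    have h3 : Real.pi^2 * ((n:ℝ) + 1/2)^2 ≤ |l| := by
      have := mul_self_le_mul_self (by positivity : (0:ℝ) ≤ Real.pi * ((n:ℝ)+1/2)) h2
      have hss : s * s = |l| := Real.mul_self_sqrt (abs_nonneg l)
      nlinarith
    have h4 : Real.pi^4 * ((n:ℝ) + 1/2)^4 ≤ l^2 := by
      have := mul_self_le_mul_self (by positivity : (0:ℝ) ≤ Real.pi^2 * ((n:ℝ)+1/2)^2) h3
      have : Real.pi^4 * ((n:ℝ)+1/2)^4 ≤ |l| * |l| := by nlinarith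
      have habs : |l| * |l| = l^2 := by rw [← abs_mul, abs_mul_self]; ring
      linarith
    have h5 : (1:ℝ) ≤ l^2 / (Real.pi^4 * ((n:ℝ)+1/2)^4) := by
      rw [le_div_iff₀ (by positivity)]
      linarith
    have h6 : (2:ℝ) ≤ 1 + l^2 / (Real.pi^4 * ((n:ℝ)+1/2)^4) := by linarith
    have h7 : Real.log 2 ≤ Real.log (1 + l^2 / (Real.pi^4 * ((n:ℝ)+1/2)^4)) :=
      Real.log_le_log (by norm_num) h6
    simp only [hf]
    linarith
  have hsum : (N:ℝ) * (Real.log 2 / 2) ≤ ∑ n ∈ Finset.range N, f n := by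
    have := Finset.card_nsmul_le_sum (Finset.range N) f (Real.log 2 / 2) hkey
    simpa [nsmul_eq_mul] using this
  have htsum : ∑ n ∈ Finset.range N, f n ≤ ∑' n, f n :=
    Summable.sum_le_tsum _ (fun n _ => hnonneg n) hsummable
  have hfinal : Real.log 2 / (2 * Real.pi) * s - 1 ≤ (N:ℝ) * (Real.log 2 / 2) := by
    have h1 : (s / Real.pi - 1/2) * (Real.log 2 / 2) ≤ (N:ℝ) * (Real.log 2 / 2) := by
      apply mul_le_mul_of_nonneg_right (le_of_lt hNgt) (by positivity)
    have h2 : Real.log 2 / (2 * Real.pi) * s - Real.log 2 / 4 =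
        (s / Real.pi - 1/2) * (Real.log 2 / 2) := by field_simp; ring
    nlinarith
  calc Real.log 2 / (2 * Real.pi) * s - 1 ≤ (N:ℝ) * (Real.log 2 / 2) := hfinal
    _ ≤ ∑ n ∈ Finset.range N, f n := hsum
    _ ≤ ∑' n, f n := htsum
end

section
/- There is a constant c > 0 such that for all real λ, μ, ν: Re ∑_{n≥0} ((−1)ⁿ μ/(π(n+1/2)) + ν)² / (π²(n+1/2)² + iλ) ≥ c·(μ² + ν²)/(1 + λ²). -/
/-!
Writing `Xₙ = π²(n + 1/2)²` and `aₙ = (-1)ⁿ m / (π(n + 1/2)) + v`, the `n`-th term is `aₙ² / (Xₙ + i l)`,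
whose real part `aₙ² Xₙ / (Xₙ² + l²)` is nonnegative. Hence the real part of the sum dominates that of its
first two terms. Since `aₙ² Xₙ = ((-1)ⁿ m + π(n + 1/2) v)²` and `Xₙ ≤ 23` for `n ≤ 1`, these two terms are at
least `((m + πv/2)² + (m - 3πv/2)²) / (23² (1 + l²))`, and the numerator is a positive definite form in `(m, v)`.
-/

open Complex Real

lemma re_ofReal_div_ofReal_add_I_mul (s x y : ℝ) :
    ((s : ℂ) / ((x : ℂ) + I * y)).re = s * x / (x ^ 2 + y ^ 2) := by
  rw [div_re]
  simp only [ofReal_re, add_re, mul_re, I_re, zero_mul, I_im, ofReal_im, mul_zero, sub_self,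
    add_zero, normSq_apply, add_im, mul_im, one_mul, zero_add, zero_div]
  ring

lemma sum_re_le_re_tsum {ι : Type*} {f : ι → ℂ} (hf : Summable f) (hre : ∀ i, 0 ≤ (f i).re)
    (s : Finset ι) : ∑ i ∈ s, (f i).re ≤ (∑' i, f i).re := by
  rw [re_tsum hf]
  exact (hasSum_re hf.hasSum).summable.sum_le_tsum s fun i _ => hre i

lemma summable_ofReal_sq_div_ofReal_add_I_mul {ι : Type*} {a x : ι → ℝ} {B : ℝ}
    (ha : ∀ i, |a i| ≤ B) (hx : ∀ i, 0 < x i) (hsum : Summable fun i => (x i)⁻¹) (y : ℝ) :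
    Summable fun i => ((a i ^ 2 : ℝ) : ℂ) / ((x i : ℂ) + I * y) := by
  refine (hsum.mul_left (B ^ 2)).of_norm_bounded fun i => ?_
  have hnorm : x i ≤ ‖(x i : ℂ) + I * y‖ := by
    simpa using re_le_norm ((x i : ℂ) + I * y)
  rw [norm_div, norm_real, Real.norm_of_nonneg (sq_nonneg _), ← div_eq_mul_inv]
  exact div_le_div₀ (sq_nonneg _) (sq_le_sq' (neg_le_of_abs_le (ha i)) (le_of_abs_le (ha i)))
    (hx i) hnorm

lemma div_le_div_sq_add_sq {P X R y : ℝ} (hP : 0 ≤ P) (hX : 0 < X) (hXR : X ≤ R) (hR : 1 ≤ R) :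
    P / (R ^ 2 * (1 + y ^ 2)) ≤ P / (X ^ 2 + y ^ 2) := by
  have hXR2 : X ^ 2 ≤ R ^ 2 := pow_le_pow_left₀ hX.le hXR 2
  have hR2 : 1 ≤ R ^ 2 := one_le_pow₀ hR
  apply div_le_div_of_nonneg_left hP (by positivity)
  nlinarith [mul_le_mul_of_nonneg_right hR2 (sq_nonneg y)]

noncomputable def halfIntEigenvalue (n : ℕ) : ℝ := π ^ 2 * (n + 1 / 2) ^ 2

noncomputable def coefficient (m v : ℝ) (n : ℕ) : ℝ := (-1) ^ n * m / (π * (n + 1 / 2)) + v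

lemma halfIntEigenvalue_pos (n : ℕ) : 0 < halfIntEigenvalue n := by
  unfold halfIntEigenvalue
  positivity

lemma summable_inv_halfIntEigenvalue : Summable fun n => (halfIntEigenvalue n)⁻¹ := by
  have h : Summable fun n : ℕ => 1 / ((n : ℝ) + 1) ^ 2 := by
    simpa using (summable_nat_add_iff 1).2 (Real.summable_one_div_nat_pow.mpr one_lt_two)
  refine .of_nonneg_of_le (fun n => inv_nonneg.2 (halfIntEigenvalue_pos n).le) (fun n => ?_)
    (h.mul_left (4 / π ^ 2))
  have hn : ((n : ℝ) + 1) ^ 2 ≤ 4 * ((n : ℝ) + 1 / 2) ^ 2 := by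
    nlinarith [(n.cast_nonneg : (0 : ℝ) ≤ n)]
  rw [halfIntEigenvalue, div_mul_div_comm, mul_one, ← one_div,
    div_le_div_iff₀ (by positivity) (by positivity)]
  nlinarith [mul_le_mul_of_nonneg_left hn (sq_nonneg π)]

lemma abs_coefficient_le (m v : ℝ) (n : ℕ) : |coefficient m v n| ≤ |m| + |v| := by
  have hden : 1 ≤ π * (n + 1 / 2) := by
    nlinarith [pi_gt_three, (n.cast_nonneg : (0 : ℝ) ≤ n)]
  calc |coefficient m v n| ≤ |(-1) ^ n * m / (π * (n + 1 / 2))| + |v| := abs_add_le _ _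
    _ ≤ |m| + |v| := by
      rw [abs_div, abs_mul, abs_pow, abs_neg, abs_one, one_pow, one_mul,
        abs_of_pos (show 0 < π * (n + 1 / 2) by positivity)]
      linarith [div_le_self (abs_nonneg m) hden]

lemma coefficient_sq_mul_halfIntEigenvalue (m v : ℝ) (n : ℕ) :
    coefficient m v n ^ 2 * halfIntEigenvalue n = ((-1) ^ n * m + π * (n + 1 / 2) * v) ^ 2 := by
  have : π * (n + 1 / 2) ≠ 0 := by positivity
  unfold coefficient halfIntEigenvalue
  field_simp

lemma halfIntEigenvalue_le_23 {n : ℕ} (hn : n ≤ 1) : halfIntEigenvalue n ≤ 23 := by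
  have hn_real : (n : ℝ) ≤ 1 := by exact_mod_cast hn
  unfold halfIntEigenvalue
  have hpi : π ^ 2 ≤ 10 := by nlinarith [pi_lt_d2, pi_pos]
  have hn' : ((n : ℝ) + 1 / 2) ^ 2 ≤ 9 / 4 := by nlinarith [(n.cast_nonneg : (0 : ℝ) ≤ n)]
  nlinarith [mul_le_mul hpi hn' (by positivity) (by norm_num)]

lemma le_sum_range_two_coefficient_sq_mul_div (l m v : ℝ) :
    1 / 23 ^ 2 * (m ^ 2 + v ^ 2) / (1 + l ^ 2) ≤
      ∑ n ∈ Finset.range 2, coefficient m v n ^ 2 * halfIntEigenvalue n /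
        (halfIntEigenvalue n ^ 2 + l ^ 2) := by
  have hterm : ∀ n ≤ 1, coefficient m v n ^ 2 * halfIntEigenvalue n / (23 ^ 2 * (1 + l ^ 2)) ≤
      coefficient m v n ^ 2 * halfIntEigenvalue n / (halfIntEigenvalue n ^ 2 + l ^ 2) :=
    fun n hn => div_le_div_sq_add_sq (by positivity [halfIntEigenvalue_pos n])
      (halfIntEigenvalue_pos n) (halfIntEigenvalue_le_23 hn) (by norm_num)
  have hpi : 1 ≤ π ^ 2 := one_le_pow₀ (by linarith [pi_gt_three])
  rw [Finset.sum_range_succ, Finset.sum_range_one]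
  calc 1 / 23 ^ 2 * (m ^ 2 + v ^ 2) / (1 + l ^ 2) = (m ^ 2 + v ^ 2) / (23 ^ 2 * (1 + l ^ 2)) := by
        field_simp
    _ ≤ (coefficient m v 0 ^ 2 * halfIntEigenvalue 0 + coefficient m v 1 ^ 2 * halfIntEigenvalue 1) /
        (23 ^ 2 * (1 + l ^ 2)) := by
      rw [coefficient_sq_mul_halfIntEigenvalue, coefficient_sq_mul_halfIntEigenvalue]
      refine div_le_div_of_nonneg_right ?_ (by positivity)
      norm_num
      nlinarith [sq_nonneg (m - π * v), mul_le_mul_of_nonneg_right hpi (sq_nonneg v)]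
    _ ≤ _ := by
      rw [add_div]
      exact add_le_add (hterm 0 zero_le_one) (hterm 1 le_rfl)

theorem stmt_5 :
    ∃ c : ℝ, 0 < c ∧ ∀ l m v : ℝ,
      c * (m ^ 2 + v ^ 2) / (1 + l ^ 2) ≤
        (∑' n : ℕ,
          ((-1 : ℂ) ^ n * (m : ℂ) / ((Real.pi : ℂ) * ((n : ℂ) + 1 / 2)) + (v : ℂ)) ^ 2 /
            ((Real.pi : ℂ) ^ 2 * ((n : ℂ) + 1 / 2) ^ 2 + Complex.I * (l : ℂ))).re := by
  refine ⟨1 / 23 ^ 2, by norm_num, fun l m v => ?_⟩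
  have hterm : ∀ n : ℕ,
      ((-1 : ℂ) ^ n * (m : ℂ) / ((π : ℂ) * ((n : ℂ) + 1 / 2)) + (v : ℂ)) ^ 2 /
        ((π : ℂ) ^ 2 * ((n : ℂ) + 1 / 2) ^ 2 + I * (l : ℂ)) =
      ((coefficient m v n ^ 2 : ℝ) : ℂ) / ((halfIntEigenvalue n : ℂ) + I * l) := by
    intro n
    simp only [coefficient, halfIntEigenvalue]
    push_cast
    ring
  have hre_nonneg (n : ℕ) :
      0 ≤ (((coefficient m v n ^ 2 : ℝ) : ℂ) / ((halfIntEigenvalue n : ℂ) + I * l)).re := by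
    rw [re_ofReal_div_ofReal_add_I_mul]
    have := halfIntEigenvalue_pos n
    positivity
  have hsum := summable_ofReal_sq_div_ofReal_add_I_mul (abs_coefficient_le m v)
    halfIntEigenvalue_pos summable_inv_halfIntEigenvalue l
  rw [tsum_congr hterm]
  refine (le_sum_range_two_coefficient_sq_mul_div l m v).trans ?_
  simpa only [re_ofReal_div_ofReal_add_I_mul] using
    sum_re_le_re_tsum hsum hre_nonneg (Finset.range 2)
end
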